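/- arXiv:2204.00524 — 4 statements merged into one kernel-verified Lean document; each statement's English description precedes it below -/
import Mathlib

section
/- Let A = P^{(1)} + ⋯ + P^{(d)} be the sum of d ≥ 1 independent uniformly random n×n permutation matrices. Then for every z ∈ ℂ, the expectation of the characteristic-type determinant satisfies E[det(I_n − z·A)] = 1 − d·z. -/
open Finset

/-- Expectation of a complex random variable under the uniform distribution on a finite type. -/
noncomputable def expectC {α : Type*} [Fintype α] (f : α → ℂ) : ℂ :=
  (∑ a, f a) / Fintype.card α

/-- The permutation matrix of `π`, with complex entries: `P i j = 1` iff `π i = j`. -/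
noncomputable def permMatrixC (n : ℕ) (π : Equiv.Perm (Fin n)) : Matrix (Fin n) (Fin n) ℂ :=
  fun i j => if π i = j then 1 else 0

/-- The sum `A = P⁽¹⁾ + ⋯ + P⁽ᵈ⁾` of the permutation matrices of `σ 0, …, σ (d-1)`. -/
noncomputable def sumPermC (n d : ℕ) (σ : Fin d → Equiv.Perm (Fin n)) :
    Matrix (Fin n) (Fin n) ℂ :=
  ∑ q : Fin d, permMatrixC n (σ q)

/-!
Write `det (1 + M) = ∑_T ∑_{supp τ ⊆ T} sign τ ∏_{i ∈ T} M (τ i) i`. Replacing every `σ q` by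
`σ q * τ` permutes the rows of `A` by `τ` and preserves the uniform law, so the expectation of
`∏_{i ∈ T} A (τ i) i` does not depend on `τ`; since the signs of the permutations supported in `T`
cancel as soon as `#T ≥ 2`, this leaves `E det (1 + M) = 1 + E tr M` for `M = -z • A`. The same
invariance makes the entries of a column of `A` equidistributed, so `n • E tr A` is the expected
sum of all entries, which is `n * d`.
-/

open Equiv

section

variable {n R : Type*} [Fintype n] [DecidableEq n] [CommRing R]

theorem Equiv.Perm.sum_ite_support_subset_sign_smul (T : Finset n) (r : R) :
    ∑ τ : Perm n, (if τ.support ⊆ T then Perm.sign τ • r else 0) = if #T ≤ 1 then r else 0 := by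
  split_ifs with hT
  · refine (sum_eq_single 1 (fun τ _ hτ => if_neg fun h => hτ ?_) (by simp)).trans (by simp)
    exact Perm.card_support_le_one.mp ((card_le_card h).trans hT)
  · obtain ⟨a, ha, b, hb, hab⟩ := one_lt_card.mp (not_le.mp hT)
    have hswap : ∀ τ : Perm n, τ.support ⊆ T → (swap a b * τ).support ⊆ T := fun τ h =>
      (Perm.support_mul_le _ _).trans <|
        sup_le (by simp [Perm.support_swap hab, insert_subset_iff, ha, hb]) h
    refine sum_ninvolution (swap a b * ·) (fun τ => ?_) (fun τ _ => ?_) (fun _ => mem_univ _)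
      (swap_mul_self_mul a b)
    · have hiff : (swap a b * τ).support ⊆ T ↔ τ.support ⊆ T :=
        ⟨fun h => by simpa using hswap _ h, hswap τ⟩
      simp only [hiff, Perm.sign_mul, Perm.sign_swap hab]
      split_ifs <;> simp
    · simpa [mul_eq_right] using hab

theorem Matrix.det_one_add_eq_sum (M : Matrix n n R) :
    (1 + M).det = ∑ T : Finset n, ∑ τ : Perm n,
      if τ.support ⊆ T then Perm.sign τ • ∏ i ∈ T, M (τ i) i else 0 := by
  rw [det_apply, sum_comm]
  refine sum_congr rfl fun τ _ => ?_
  have hone : ∀ T : Finset n, ∏ i ∈ univ \ T, (1 : Matrix n n R) (τ i) i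
      = if τ.support ⊆ T then 1 else 0 := fun T => by
    simp only [Matrix.one_apply, prod_boole]
    congr 1
    simp only [mem_sdiff, mem_univ, true_and, eq_iff_iff]
    exact ⟨fun h i hi => by_contra fun hiT => Perm.mem_support.mp hi (h i hiT),
      fun h i hiT => Perm.notMem_support.mp fun hi => hiT (h hi)⟩
  simp only [Matrix.add_apply, add_comm ((1 : Matrix n n R) _ _), prod_add, powerset_univ, hone,
    smul_sum]
  refine sum_congr rfl fun T _ => ?_
  split_ifs <;> simp

theorem Finset.sum_ite_card_le_one {M : Type*} [AddCommMonoid M] (f : Finset n → M) :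
    ∑ T : Finset n, (if #T ≤ 1 then f T else 0) = f ∅ + ∑ i, f {i} := by
  have hT : ({T | #T ≤ 1} : Finset (Finset n)) =
      insert ∅ (univ.map ⟨singleton, singleton_injective⟩) := by
    ext T
    simp [Nat.le_one_iff_eq_zero_or_eq_one, card_eq_one, eq_comm]
  rw [← sum_filter, hT, sum_insert (by simp), sum_map]
  rfl

end

/-- `M` is a random matrix under the uniform measure on the finite type `Ω`, whose law is
invariant under every permutation of the rows. -/
def RowExchangeable {n Ω R : Type*} (M : Ω → Matrix n n R) : Prop :=
  ∀ τ : Perm n, ∃ e : Ω ≃ Ω, ∀ ω, M (e ω) = (M ω).submatrix τ id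

namespace RowExchangeable

variable {n Ω R : Type*} {M : Ω → Matrix n n R}

theorem sum_submatrix [Fintype Ω] {β : Type*} [AddCommMonoid β] (hM : RowExchangeable M)
    (τ : Perm n) (F : Matrix n n R → β) : ∑ ω, F ((M ω).submatrix τ id) = ∑ ω, F (M ω) := by
  obtain ⟨e, he⟩ := hM τ
  simp only [← he]
  exact e.sum_comp (F ∘ M)

theorem smul {S : Type*} [SMul S R] (hM : RowExchangeable M) (c : S) :
    RowExchangeable (fun ω => c • M ω) :=
  fun τ => (hM τ).imp fun _ he ω => by simp only [he, Matrix.submatrix_smul]; rfl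

theorem sum_det_one_add [Fintype n] [DecidableEq n] [Fintype Ω] [CommRing R]
    (hM : RowExchangeable M) : ∑ ω, (1 + M ω).det = ∑ ω, (1 + (M ω).trace) := by
  have hrow : ∀ (T : Finset n) (τ : Perm n),
      ∑ ω, ∏ i ∈ T, M ω (τ i) i = ∑ ω, ∏ i ∈ T, M ω i i := fun T τ =>
    hM.sum_submatrix τ fun N => ∏ i ∈ T, N i i
  calc ∑ ω, (1 + M ω).det
      = ∑ T : Finset n, ∑ τ : Perm n,
          if τ.support ⊆ T then Perm.sign τ • ∑ ω, ∏ i ∈ T, M ω (τ i) i else 0 := by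
        simp only [Matrix.det_one_add_eq_sum, smul_sum]
        rw [sum_comm]
        refine sum_congr rfl fun T _ => ?_
        rw [sum_comm]
        refine sum_congr rfl fun τ _ => ?_
        split_ifs <;> simp
    _ = ∑ T : Finset n, if #T ≤ 1 then ∑ ω, ∏ i ∈ T, M ω i i else 0 := by
        simp only [hrow, Perm.sum_ite_support_subset_sign_smul]
    _ = ∑ ω, (1 + (M ω).trace) := by
        rw [sum_ite_card_le_one]
        simp [sum_add_distrib, Matrix.trace, sum_comm (γ := Ω)]

theorem sum_entries_eq_card_smul_sum_trace [Fintype n] [DecidableEq n] [Fintype Ω]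
    [AddCommMonoid R] (hM : RowExchangeable M) :
    ∑ ω, ∑ i, ∑ j, M ω i j = Fintype.card n • ∑ ω, (M ω).trace := by
  have hcol : ∀ j, ∑ i, ∑ ω, M ω i j = Fintype.card n • ∑ ω, M ω j j := fun j =>
    (sum_congr rfl fun i _ => by simpa using hM.sum_submatrix (swap j i) fun N => N j j).trans
      (by simp)
  calc ∑ ω, ∑ i, ∑ j, M ω i j = ∑ j, ∑ i, ∑ ω, M ω i j :=
        sum_comm.trans ((sum_congr rfl fun i _ => sum_comm).trans sum_comm)
    _ = Fintype.card n • ∑ ω, (M ω).trace := by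
        simp only [hcol, ← smul_sum, Matrix.trace, Matrix.diag]
        rw [sum_comm]

end RowExchangeable

theorem rowExchangeable_sumPermC (n d : ℕ) : RowExchangeable (sumPermC n d) := fun τ =>
  ⟨Equiv.piCongrRight fun _ => Equiv.mulRight τ, fun σ => by
    ext i j
    simp only [sumPermC, permMatrixC, Matrix.sum_apply, Matrix.submatrix_apply, piCongrRight_apply,
      Pi.map_apply, coe_mulRight, Perm.mul_apply, id]
    rfl⟩

theorem sum_sumPermC_apply (n d : ℕ) (σ : Fin d → Perm (Fin n)) :
    ∑ i, ∑ j, sumPermC n d σ i j = n * d := by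
  simp only [sumPermC, permMatrixC, Matrix.sum_apply]
  rw [sum_congr rfl fun i _ => sum_comm]
  simp

theorem expected_det_general (n d : ℕ) (hn : 1 ≤ n) (z : ℂ) :
    expectC (fun σ : Fin d → Equiv.Perm (Fin n) =>
        (1 - z • sumPermC n d σ).det) = 1 - d * z := by
  have hA := rowExchangeable_sumPermC n d
  have hN : (Fintype.card (Fin d → Perm (Fin n)) : ℂ) ≠ 0 :=
    Nat.cast_ne_zero.mpr Fintype.card_ne_zero
  have htrace : ∑ σ, (sumPermC n d σ).trace = Fintype.card (Fin d → Perm (Fin n)) * d := by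
    have h := hA.sum_entries_eq_card_smul_sum_trace
    simp only [sum_sumPermC_apply, sum_const, card_univ, Fintype.card_fin, nsmul_eq_mul] at h
    refine mul_left_cancel₀ (Nat.cast_ne_zero.mpr (by omega) : (n : ℂ) ≠ 0) ?_
    rw [← h]
    ring
  have hdet := (hA.smul (-z)).sum_det_one_add
  simp only [neg_smul, ← sub_eq_add_neg, Matrix.trace_neg, Matrix.trace_smul] at hdet
  rw [expectC, hdet, sum_sub_distrib, ← smul_sum, htrace, sum_const, card_univ, nsmul_one,
    smul_eq_mul]
  field_simp

/-- For the sum `A` of `d ≥ 1` independent uniform `n×n` permutation matrices and every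
`z ∈ ℂ`, the expected characteristic-type determinant satisfies
`E[det(Iₙ − z·A)] = 1 − d·z`. -/
theorem expected_det (n d : ℕ) (hn : 1 ≤ n) (hd : 1 ≤ d) (z : ℂ) :
    expectC (fun σ : Fin d → Equiv.Perm (Fin n) =>
        (1 - z • sumPermC n d σ).det) = 1 - d * z :=
  expected_det_general n d hn z
end

section
/- Let A be a random n×n matrix with complex entries that are almost surely bounded, and suppose the law of A is invariant under permuting its columns, i.e. for every permutation σ of {1,…,n} the matrix (A_{i,σ(j)})_{i,j} has the same law as A. For 1 ≤ k ≤ n let Δ_k = Σ_{I ⊆ {1,…,n}, |I| = k} det(A(I)), where A(I) is the submatrix of A with rows and columns indexed by I. Then E[Δ_k] = 0 for every 2 ≤ k ≤ n, and E[Δ_1] = E[tr A]. -/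
/-!
Swapping two columns `a, b ∈ I` of `A` negates the principal minor `det A(I)` and, by hypothesis,
does not change the law of `A`; hence `E[det A(I)] = -E[det A(I)] = 0` whenever `|I| ≥ 2`.
Boundedness makes every minor integrable, so `E[Δ_k]` is the sum of these vanishing expectations.
For `k = 1` the minors are the diagonal entries, so `Δ_1 = tr A` pointwise.
-/

open Finset MeasureTheory

open scoped Classical in
/-- The `k`-th secular coefficient `Δ_k = Σ_{|I| = k} det(A(I))` of an `n×n` complex matrix,
where `A(I)` is the submatrix with rows and columns indexed by `I`. -/
noncomputable def secCoeff {n : ℕ} (M : Fin n → Fin n → ℂ) (k : ℕ) : ℂ :=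
  ∑ I ∈ Finset.univ.filter (fun I : Finset (Fin n) => I.card = k),
    Matrix.det (Matrix.of fun i j : {x // x ∈ I} => M i.1 j.1)

theorem integral_eq_zero_of_map_eq_of_comp_eq_neg {β E : Type*} [MeasurableSpace β]
    [NormedAddCommGroup E] [NormedSpace ℝ E] {ν : Measure β} {φ : β → β}
    (hφ : AEMeasurable φ ν) (hν : ν.map φ = ν) {f : β → E} (hf : AEStronglyMeasurable f ν)
    (hodd : ∀ x, f (φ x) = -f x) :
    ∫ x, f x ∂ν = 0 := by
  have : IsAddTorsionFree E := .of_isTorsionFree ℝ E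
  refine self_eq_neg.mp ?_
  calc ∫ x, f x ∂ν = ∫ x, f x ∂(ν.map φ) := by rw [hν]
    _ = ∫ x, f (φ x) ∂ν := integral_map hφ (by rwa [hν])
    _ = -∫ x, f x ∂ν := by simp only [hodd, integral_neg]

theorem integrable_comp_of_ae_mem_isCompact {Ω β E : Type*} [MeasurableSpace Ω]
    [TopologicalSpace β] [NormedAddCommGroup E] {μ : Measure Ω} [IsFiniteMeasure μ]
    {X : Ω → β} {K : Set β} (hK : IsCompact K) (hXK : ∀ᵐ ω ∂μ, X ω ∈ K) {f : β → E}
    (hf : Continuous f) (hfX : AEStronglyMeasurable (fun ω => f (X ω)) μ) :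
    Integrable (fun ω => f (X ω)) μ := by
  obtain ⟨C, hC⟩ := hK.exists_bound_of_continuousOn hf.continuousOn
  exact .of_bound hfX C (hXK.mono fun ω hω => hC _ hω)

namespace Matrix

variable {ι R : Type*} [DecidableEq ι] [CommRing R]

def principalMinor (M : Matrix ι ι R) (I : Finset ι) : R :=
  (M.submatrix ((↑) : I → ι) (↑)).det

theorem principalMinor_singleton (M : Matrix ι ι R) (i : ι) :
    M.principalMinor {i} = M i i := by
  rw [principalMinor, det_unique]
  rfl

theorem principalMinor_submatrix_swap (M : Matrix ι ι R) {I : Finset ι} {a b : ι}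
    (ha : a ∈ I) (hb : b ∈ I) (hab : a ≠ b) :
    (M.submatrix id (Equiv.swap a b)).principalMinor I = -M.principalMinor I := by
  have hswap : (Equiv.swap a b) ∘ ((↑) : I → ι) = (↑) ∘ Equiv.swap (⟨a, ha⟩ : I) ⟨b, hb⟩ :=
    (Function.Embedding.subtype (· ∈ I)).swap_comp ⟨a, ha⟩ ⟨b, hb⟩
  have hsub : (M.submatrix id (Equiv.swap a b)).submatrix ((↑) : I → ι) ((↑) : I → ι) =
      (M.submatrix ((↑) : I → ι) ((↑) : I → ι)).submatrix id (Equiv.swap ⟨a, ha⟩ ⟨b, hb⟩) := by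
    simp only [submatrix_submatrix, Function.comp_id, Function.id_comp, hswap]
  rw [principalMinor, hsub, det_permute', Equiv.Perm.sign_swap (by simpa using hab)]
  simp [principalMinor]

theorem continuous_principalMinor [TopologicalSpace R] [IsTopologicalRing R] (I : Finset ι) :
    Continuous fun M : Matrix ι ι R => M.principalMinor I :=
  (continuous_id.matrix_submatrix _ _).matrix_det

end Matrix

theorem secCoeff_eq_sum_principalMinor {n : ℕ} (M : Fin n → Fin n → ℂ) (k : ℕ) :
    secCoeff M k = ∑ I ∈ powersetCard k univ, (Matrix.of M).principalMinor I := by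
  rw [secCoeff, powersetCard_eq_filter, powerset_univ]
  -- the two filters differ only in their decidability instances
  convert rfl using 2
  rfl

theorem secCoeff_one {n : ℕ} (M : Fin n → Fin n → ℂ) : secCoeff M 1 = ∑ i, M i i := by
  simp [secCoeff_eq_sum_principalMinor, powersetCard_one, Matrix.principalMinor_singleton]

section RandomMatrix

variable {ι Ω 𝕜 : Type*} [Fintype ι] [DecidableEq ι] [RCLike 𝕜] [MeasurableSpace Ω]
  {μ : Measure Ω} {A : Ω → ι → ι → 𝕜}

theorem integrable_principalMinor_of_ae_bounded [IsFiniteMeasure μ] (hA : Measurable A)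
    (hbdd : ∃ C : ℝ, ∀ᵐ ω ∂μ, ∀ i j, ‖A ω i j‖ ≤ C) (I : Finset ι) :
    Integrable (fun ω => (Matrix.of (A ω)).principalMinor I) μ := by
  obtain ⟨C, hC⟩ := hbdd
  have hcont : Continuous fun M : ι → ι → 𝕜 => (Matrix.of M).principalMinor I :=
    Matrix.continuous_principalMinor I
  refine integrable_comp_of_ae_mem_isCompact (X := A)
    (isCompact_univ_pi fun _ => isCompact_univ_pi fun _ => isCompact_closedBall 0 C)
    (hC.mono fun ω hω => ?_) hcont (hcont.comp_aestronglyMeasurable hA.aestronglyMeasurable)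
  simpa using hω

theorem integral_principalMinor_eq_zero_of_map_colPerm_eq (hA : Measurable A)
    (hinv : ∀ σ : Equiv.Perm ι,
      Measure.map (fun ω => fun i j => A ω i (σ j)) μ = Measure.map A μ)
    {I : Finset ι} (hI : 2 ≤ I.card) :
    ∫ ω, (Matrix.of (A ω)).principalMinor I ∂μ = 0 := by
  obtain ⟨a, ha, b, hb, hab⟩ := one_lt_card.mp hI
  have hswap : Measurable fun (M : ι → ι → 𝕜) i j => M i (Equiv.swap a b j) := by fun_prop
  have hcont : Continuous fun M : ι → ι → 𝕜 => (Matrix.of M).principalMinor I :=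
    Matrix.continuous_principalMinor I
  rw [← integral_map hA.aemeasurable hcont.aestronglyMeasurable]
  refine integral_eq_zero_of_map_eq_of_comp_eq_neg hswap.aemeasurable ?_
    hcont.aestronglyMeasurable fun M => Matrix.principalMinor_submatrix_swap _ ha hb hab
  rw [Measure.map_map hswap hA]
  exact hinv (Equiv.swap a b)

end RandomMatrix

/-- If the law of a bounded random `n×n` complex matrix `A` is invariant under permuting its
columns, then `E[Δ_k] = 0` for all `2 ≤ k ≤ n`, and `E[Δ_1] = E[tr A]`. -/
theorem expected_secular_coeff (n : ℕ) (Ω : Type*) [MeasurableSpace Ω]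
    (μ : Measure Ω) [IsProbabilityMeasure μ]
    (A : Ω → Fin n → Fin n → ℂ) (hA : Measurable A)
    (hbdd : ∃ C : ℝ, ∀ᵐ ω ∂μ, ∀ i j, ‖A ω i j‖ ≤ C)
    (hinv : ∀ σ : Equiv.Perm (Fin n),
      Measure.map (fun ω => fun i j => A ω i (σ j)) μ = Measure.map A μ) :
    (∀ k, 2 ≤ k → k ≤ n → ∫ ω, secCoeff (A ω) k ∂μ = 0) ∧
      (∫ ω, secCoeff (A ω) 1 ∂μ = ∫ ω, ∑ i, A ω i i ∂μ) := by
  refine ⟨fun k hk _ => ?_, by simp only [secCoeff_one]⟩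
  simp only [secCoeff_eq_sum_principalMinor]
  rw [integral_finsetSum _ fun I _ => integrable_principalMinor_of_ae_bounded hA hbdd I]
  refine sum_eq_zero fun I hI => integral_principalMinor_eq_zero_of_map_colPerm_eq hA hinv ?_
  rwa [(mem_powersetCard.mp hI).2]
end

section
/- Let A be a random n×n matrix with complex entries that are almost surely bounded, and suppose the law of A is invariant under permuting rows and under permuting columns, i.e. for every permutation σ of {1,…,n}, both (A_{σ(i),j})_{i,j} and (A_{i,σ(j)})_{i,j} have the same law as A. Let I, J ⊆ {1,…,n} with |I| = |J| = k. If |I ∩ J| ≤ k − 2, then E[det(A(I))·det(A(J))] = 0. -/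
/-!
Since `|I ∩ J| ≤ k - 2`, there are two distinct indices `a, b ∈ I \ J`. Swapping rows `a` and `b`
flips the sign of `det A(I)` and leaves `det A(J)` unchanged, so it negates the integrand; by row
exchangeability it does not change the expectation, which therefore vanishes.
-/

open Finset MeasureTheory

noncomputable def subDet {n : ℕ} (M : Fin n → Fin n → ℂ) (I : Finset (Fin n)) : ℂ :=
  Matrix.det (Matrix.of fun i j : {x // x ∈ I} => M i.1 j.1)

theorem integral_comp_eq_zero_of_map_eq_of_comp_eq_neg {Ω α F : Type*} [MeasurableSpace Ω]
    [MeasurableSpace α] [NormedAddCommGroup F] [NormedSpace ℝ F] {μ : Measure Ω}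
    {X : Ω → α} (hX : Measurable X) {τ : α → α} (hτ : Measurable τ)
    (hmap : μ.map (fun ω => τ (X ω)) = μ.map X) {f : α → F}
    (hf : AEStronglyMeasurable f (μ.map X)) (hneg : ∀ x, f (τ x) = -f x) :
    ∫ ω, f (X ω) ∂μ = 0 := by
  have hτX : Measurable fun ω => τ (X ω) := hτ.comp hX
  have hself : ∫ ω, f (X ω) ∂μ = -∫ ω, f (X ω) ∂μ :=
    calc ∫ ω, f (X ω) ∂μ = ∫ x, f x ∂μ.map X := (integral_map hX.aemeasurable hf).symm
      _ = ∫ ω, f (τ (X ω)) ∂μ := by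
        rw [← hmap, integral_map hτX.aemeasurable (hmap ▸ hf)]
      _ = -∫ ω, f (X ω) ∂μ := by simp only [hneg, integral_neg]
  have htwo : (2 : ℝ) • ∫ ω, f (X ω) ∂μ = 0 := by
    rw [two_smul]
    nth_rw 1 [hself]
    exact neg_add_cancel _
  exact (smul_eq_zero.mp htwo).resolve_left two_ne_zero

namespace subDet

variable {n : ℕ}

theorem continuous (I : Finset (Fin n)) : Continuous fun M : Fin n → Fin n → ℂ => subDet M I := by
  unfold subDet
  fun_prop

theorem swap_rows_of_mem (M : Fin n → Fin n → ℂ) {I : Finset (Fin n)} {a b : Fin n}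
    (ha : a ∈ I) (hb : b ∈ I) (hab : a ≠ b) :
    subDet (fun i => M (Equiv.swap a b i)) I = -subDet M I := by
  set a' : {x // x ∈ I} := ⟨a, ha⟩
  set b' : {x // x ∈ I} := ⟨b, hb⟩
  have hswap : (Matrix.of fun i j : {x // x ∈ I} => M (Equiv.swap a b i.1) j.1)
      = (Matrix.of fun i j : {x // x ∈ I} => M i.1 j.1).submatrix (Equiv.swap a' b') id := by
    ext i j
    simp only [Matrix.of_apply, Matrix.submatrix_apply, id]
    rw [← Equiv.Perm.ofSubtype_swap_eq a' b', Equiv.Perm.ofSubtype_apply_coe]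
  have hab' : a' ≠ b' := fun h => hab (congrArg Subtype.val h)
  rw [subDet, subDet, hswap, Matrix.det_permute, Equiv.Perm.sign_swap hab']
  simp

theorem swap_rows_of_notMem (M : Fin n → Fin n → ℂ) {J : Finset (Fin n)} {a b : Fin n}
    (ha : a ∉ J) (hb : b ∉ J) :
    subDet (fun i => M (Equiv.swap a b i)) J = subDet M J := by
  unfold subDet
  congr 1
  ext i j
  have hia : i.1 ≠ a := fun h => ha (h ▸ i.2)
  have hib : i.1 ≠ b := fun h => hb (h ▸ i.2)
  simp only [Matrix.of_apply, Equiv.swap_apply_of_ne_of_ne hia hib]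

end subDet

theorem expected_prod_subdets_general (n : ℕ) (Ω : Type*) [MeasurableSpace Ω]
    (μ : Measure Ω)
    (A : Ω → Fin n → Fin n → ℂ) (hA : Measurable A)
    (hrow : ∀ σ : Equiv.Perm (Fin n),
      Measure.map (fun ω => fun i j => A ω (σ i) j) μ = Measure.map A μ)
    (k : ℕ) (I J : Finset (Fin n)) (hI : I.card = k)
    (hIJ : (I ∩ J).card + 2 ≤ k) :
    ∫ ω, subDet (A ω) I * subDet (A ω) J ∂μ = 0 := by
  have hcard : 1 < (I \ J).card := by
    have := card_sdiff_add_card_inter I J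
    omega
  obtain ⟨a, ha, b, hb, hab⟩ := one_lt_card.mp hcard
  rw [mem_sdiff] at ha hb
  refine integral_comp_eq_zero_of_map_eq_of_comp_eq_neg hA
    (τ := fun M i => M (Equiv.swap a b i)) (f := fun M => subDet M I * subDet M J)
    (measurable_pi_lambda _ fun i => measurable_pi_apply _) (hrow (Equiv.swap a b))
    ((subDet.continuous I).mul (subDet.continuous J)).aestronglyMeasurable fun M => ?_
  rw [subDet.swap_rows_of_mem M ha.1 hb.1 hab, subDet.swap_rows_of_notMem M ha.2 hb.2, neg_mul]

/-- If the law of a bounded random `n×n` complex matrix `A` is invariant under permuting its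
rows and under permuting its columns, and `I, J ⊆ {1,…,n}` with `|I| = |J| = k` and
`|I ∩ J| ≤ k − 2`, then `E[det(A(I))·det(A(J))] = 0`. -/
theorem expected_prod_subdets (n : ℕ) (Ω : Type*) [MeasurableSpace Ω]
    (μ : Measure Ω) [IsProbabilityMeasure μ]
    (A : Ω → Fin n → Fin n → ℂ) (hA : Measurable A)
    (hbdd : ∃ C : ℝ, ∀ᵐ ω ∂μ, ∀ i j, ‖A ω i j‖ ≤ C)
    (hrow : ∀ σ : Equiv.Perm (Fin n),
      Measure.map (fun ω => fun i j => A ω (σ i) j) μ = Measure.map A μ)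
    (hcol : ∀ σ : Equiv.Perm (Fin n),
      Measure.map (fun ω => fun i j => A ω i (σ j)) μ = Measure.map A μ)
    (k : ℕ) (I J : Finset (Fin n)) (hI : I.card = k) (hJ : J.card = k)
    (hIJ : (I ∩ J).card + 2 ≤ k) :
    ∫ ω, subDet (A ω) I * subDet (A ω) J ∂μ = 0 :=
  expected_prod_subdets_general n Ω μ A hA hrow k I J hI hIJ
end

section
/- Let A = P^{(1)} + ⋯ + P^{(d)} be the sum of d ≥ 1 independent uniformly random n×n permutation matrices. Let r ≥ 1, let i_1,…,i_r, j_1,…,j_r ∈ {1,…,n} be such that the pairs (i_1,j_1),…,(i_r,j_r) are pairwise distinct, and let k_1,…,k_r ∈ {1,…,d} with k = k_1 + ⋯ + k_r ≤ n. Then P(A_{i_1,j_1} = k_1, …, A_{i_r,j_r} = k_r) ≤ (∏_{m=1}^r C(d, k_m)) · (n − k)!/n!, where C(d, k_m) is the binomial coefficient d choose k_m. In particular this probability is at most (d^k / (k_1!⋯k_r!)) · (n − k)!/n!. -/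
/-!
If `A i_m j_m = k_m` for all `m`, record for each `m` the set `S_m ⊆ {1,…,d}` of the copies `q`
with `σ_q (i_m) = j_m`; there are `∏ C(d, k_m)` possible families `(S_m)`. For a fixed family
the copies are independent, and copy `q` must take `t_q = #{m | q ∈ S_m}` prescribed values at
`t_q` distinct points (distinct because the pairs `(i_m, j_m)` are distinct and `σ_q` is
injective), which has probability `(n - t_q)!/n! = 1/n^(t_q)` with `n^(t)` the falling factorial.
Since `t ↦ n^(t)` is submultiplicative and `∑ t_q = ∑ k_m = K`, the product of these
probabilities is at most `1/n^(K) = (n - K)!/n!`. Finally `C(d, k) ≤ d^k/k!`.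
-/

open Finset

open scoped Classical in
/-- Probability of an event under the uniform distribution on a finite type. -/
noncomputable def pr {α : Type*} [Fintype α] (p : α → Prop) : ℝ :=
  ((Finset.univ.filter fun a => p a).card : ℝ) / Fintype.card α

/-- The permutation matrix of `π`, with natural-number entries: `P i j = 1` iff `π i = j`. -/
def permMatrixN (n : ℕ) (π : Equiv.Perm (Fin n)) : Matrix (Fin n) (Fin n) ℕ :=
  fun i j => if π i = j then 1 else 0

/-- The sum `A = P⁽¹⁾ + ⋯ + P⁽ᵈ⁾` of the permutation matrices of `σ 0, …, σ (d-1)`. -/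
def sumPermN (n d : ℕ) (σ : Fin d → Equiv.Perm (Fin n)) : Matrix (Fin n) (Fin n) ℕ :=
  ∑ q : Fin d, permMatrixN n (σ q)

open Equiv
open scoped Nat

namespace Nat

lemma descFactorial_add_le (n a b : ℕ) :
    n.descFactorial (a + b) ≤ n.descFactorial a * n.descFactorial b := by
  rw [← descFactorial_mul_descFactorial (le_add_right a b), Nat.add_sub_cancel_left, mul_comm]
  exact Nat.mul_le_mul_left _ (descFactorial_le b (sub_le n a))

lemma descFactorial_sum_le_prod {ι : Type*} (n : ℕ) (s : Finset ι) (t : ι → ℕ) :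
    n.descFactorial (∑ i ∈ s, t i) ≤ ∏ i ∈ s, n.descFactorial (t i) := by
  classical
  induction s using Finset.induction_on with
  | empty => simp
  | insert a s ha ih =>
    rw [Finset.sum_insert ha, Finset.prod_insert ha]
    exact (descFactorial_add_le n _ _).trans (Nat.mul_le_mul_left _ ih)

end Nat

section Perm

variable {α : Type*} [Fintype α] [DecidableEq α]

lemma card_perm_forall_apply_eq_self (T : Finset α) :
    #{τ : Perm α | ∀ x ∈ T, τ x = x} = (Fintype.card α - #T)! := by
  have e : Perm {x // x ∉ T} ≃ {τ : Perm α // ∀ x ∈ T, τ x = x} :=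
    (Perm.subtypeEquivSubtypePerm (· ∉ T)).trans
      (subtypeEquivRight fun τ => forall_congr' fun _ => by rw [not_not])
  rw [← Fintype.card_subtype, ← Fintype.card_congr e, Fintype.card_perm,
    Fintype.card_subtype_compl, Fintype.card_coe]

lemma card_perm_forall_apply_eq_le (P : Finset (α × α)) :
    #{σ : Perm α | ∀ p ∈ P, σ p.1 = p.2} ≤ (Fintype.card α - #P)! := by
  obtain hempty | ⟨σ₀, hσ₀⟩ := Finset.eq_empty_or_nonempty {σ : Perm α | ∀ p ∈ P, σ p.1 = p.2}
  · rw [hempty, Finset.card_empty]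
    exact Nat.zero_le _
  simp only [Finset.mem_filter, Finset.mem_univ, true_and] at hσ₀
  -- `σ₀` witnesses that `P` is the graph of a partial injection, so it has `#P` distinct sources
  have hfst : Set.InjOn Prod.fst (P : Set (α × α)) := fun p hp q hq h =>
    Prod.ext h (by rw [← hσ₀ p hp, ← hσ₀ q hq, h])
  have htranslate : #{σ : Perm α | ∀ p ∈ P, σ p.1 = p.2} =
      #{τ : Perm α | ∀ x ∈ P.image Prod.fst, τ x = x} := by
    refine Finset.card_equiv (Equiv.mulLeft σ₀⁻¹) fun σ => ?_
    simp only [Finset.mem_filter, Finset.mem_univ, true_and, Finset.forall_mem_image,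
      Equiv.coe_mulLeft, Perm.mul_apply, Perm.inv_eq_iff_eq]
    exact forall₂_congr fun p hp => by rw [hσ₀ p hp]
  rw [htranslate, card_perm_forall_apply_eq_self, Finset.card_image_of_injOn hfst]

lemma card_perm_forall_apply_eq_mul_descFactorial_le (P : Finset (α × α)) :
    #{σ : Perm α | ∀ p ∈ P, σ p.1 = p.2} * (Fintype.card α).descFactorial #P
      ≤ (Fintype.card α)! := by
  rcases le_or_gt #P (Fintype.card α) with hP | hP
  · rw [← Nat.factorial_mul_descFactorial hP]
    exact Nat.mul_le_mul_right _ (card_perm_forall_apply_eq_le P)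
  · rw [Nat.descFactorial_eq_zero_iff_lt.mpr hP, mul_zero]
    exact Nat.zero_le _

end Perm

section Family

variable {α ι κ : Type*} [Fintype α] [DecidableEq α] [Fintype ι] [DecidableEq ι] [Fintype κ]

lemma card_forall_mem_apply_eq_mul_descFactorial_le (i j : κ → α)
    (hij : Function.Injective fun m => (i m, j m)) (S : κ → Finset ι) :
    #{σ : ι → Perm α | ∀ m, ∀ q ∈ S m, σ q (i m) = j m} *
        (Fintype.card α).descFactorial (∑ m, #(S m))
      ≤ (Fintype.card α)! ^ Fintype.card ι := by
  set P : ι → Finset (α × α) := fun q => ({m | q ∈ S m} : Finset κ).image fun m => (i m, j m)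
  have hsum : ∑ m, #(S m) = ∑ q, #(P q) := by
    simp only [P, Finset.card_image_of_injective _ hij, Finset.card_filter]
    rw [Finset.sum_comm]
    simp
  have hfactor : ({σ : ι → Perm α | ∀ m, ∀ q ∈ S m, σ q (i m) = j m} : Finset _) =
      Fintype.piFinset fun q => {τ : Perm α | ∀ p ∈ P q, τ p.1 = p.2} := by
    ext σ
    simp only [P, Finset.mem_filter, Finset.mem_univ, true_and, Fintype.mem_piFinset,
      Finset.forall_mem_image]
    exact forall_comm
  rw [hfactor, Fintype.card_piFinset, hsum]
  calc (∏ q, #{τ : Perm α | ∀ p ∈ P q, τ p.1 = p.2}) *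
          (Fintype.card α).descFactorial (∑ q, #(P q))
      ≤ (∏ q, #{τ : Perm α | ∀ p ∈ P q, τ p.1 = p.2}) *
          ∏ q, (Fintype.card α).descFactorial #(P q) :=
        Nat.mul_le_mul_left _ (Nat.descFactorial_sum_le_prod _ _ _)
    _ = ∏ q, #{τ : Perm α | ∀ p ∈ P q, τ p.1 = p.2} * (Fintype.card α).descFactorial #(P q) :=
        Finset.prod_mul_distrib.symm
    _ ≤ ∏ _q : ι, (Fintype.card α)! :=
        Finset.prod_le_prod' fun q _ => card_perm_forall_apply_eq_mul_descFactorial_le (P q)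
    _ = (Fintype.card α)! ^ Fintype.card ι := by rw [Finset.prod_const, Finset.card_univ]

variable [DecidableEq κ]

lemma card_forall_card_eq_le_sum (i j : κ → α) (k : κ → ℕ) :
    #{σ : ι → Perm α | ∀ m, #{q | σ q (i m) = j m} = k m}
      ≤ ∑ S ∈ Fintype.piFinset fun m => Finset.powersetCard (k m) Finset.univ,
          #{σ : ι → Perm α | ∀ m, ∀ q ∈ S m, σ q (i m) = j m} := by
  refine (Finset.card_le_card fun σ hσ => ?_).trans Finset.card_biUnion_le
  simp only [Finset.mem_filter, Finset.mem_univ, true_and] at hσ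
  simp only [Finset.mem_biUnion, Fintype.mem_piFinset, Finset.mem_powersetCard,
    Finset.mem_filter, Finset.mem_univ, true_and]
  exact ⟨fun m => {q | σ q (i m) = j m}, fun m => ⟨Finset.subset_univ _, hσ m⟩,
    fun m q hq => (Finset.mem_filter.mp hq).2⟩

lemma card_forall_card_eq_mul_descFactorial_le (i j : κ → α)
    (hij : Function.Injective fun m => (i m, j m)) (k : κ → ℕ) :
    #{σ : ι → Perm α | ∀ m, #{q | σ q (i m) = j m} = k m} *
        (Fintype.card α).descFactorial (∑ m, k m)
      ≤ (∏ m, (Fintype.card ι).choose (k m)) * (Fintype.card α)! ^ Fintype.card ι := by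
  set 𝒮 := Fintype.piFinset fun m => Finset.powersetCard (k m) (Finset.univ : Finset ι)
  calc _ ≤ (∑ S ∈ 𝒮, #{σ : ι → Perm α | ∀ m, ∀ q ∈ S m, σ q (i m) = j m}) *
          (Fintype.card α).descFactorial (∑ m, k m) :=
        Nat.mul_le_mul_right _ (card_forall_card_eq_le_sum i j k)
    _ = ∑ S ∈ 𝒮, #{σ : ι → Perm α | ∀ m, ∀ q ∈ S m, σ q (i m) = j m} *
          (Fintype.card α).descFactorial (∑ m, k m) := Finset.sum_mul _ _ _
    _ ≤ ∑ _S ∈ 𝒮, (Fintype.card α)! ^ Fintype.card ι := Finset.sum_le_sum fun S hS => by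
        have hcard m : #(S m) = k m :=
          (Finset.mem_powersetCard.mp (Fintype.mem_piFinset.mp hS m)).2
        simpa only [hcard] using card_forall_mem_apply_eq_mul_descFactorial_le i j hij S
    _ = (∏ m, (Fintype.card ι).choose (k m)) * (Fintype.card α)! ^ Fintype.card ι := by
        simp [𝒮, Finset.card_powersetCard]

end Family

lemma pr_eq_card_div {α : Type*} [Fintype α] (p : α → Prop) [DecidablePred p] :
    pr p = (#{a | p a} : ℝ) / Fintype.card α := by
  unfold pr
  congr

lemma sumPermN_apply (n d : ℕ) (σ : Fin d → Perm (Fin n)) (a b : Fin n) :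
    sumPermN n d σ a b = #{q | σ q a = b} := by
  simp [sumPermN, permMatrixN, Matrix.sum_apply]

lemma prod_choose_le_pow_sum_div {κ : Type*} [Fintype κ] (d : ℕ) (k : κ → ℕ) :
    ∏ m, (d.choose (k m) : ℝ) ≤ (d : ℝ) ^ (∑ m, k m) / ∏ m, ((k m)! : ℝ) := by
  rw [← Finset.prod_pow_eq_pow_sum, ← Finset.prod_div_distrib]
  exact Finset.prod_le_prod (fun _ _ => Nat.cast_nonneg _) fun m _ => Nat.choose_le_pow_div _ _

theorem entries_prob_upper_bound_general (n d r : ℕ)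
    (i j : Fin r → Fin n)
    (hdist : ∀ a b : Fin r, a ≠ b → (i a, j a) ≠ (i b, j b))
    (k : Fin r → ℕ)
    (K : ℕ) (hK : ∑ m, k m = K) (hKn : K ≤ n) :
    pr (fun σ : Fin d → Equiv.Perm (Fin n) =>
        ∀ m : Fin r, sumPermN n d σ (i m) (j m) = k m) ≤
      (∏ m : Fin r, (Nat.choose d (k m) : ℝ)) *
        (Nat.factorial (n - K) : ℝ) / (Nat.factorial n : ℝ) ∧
    pr (fun σ : Fin d → Equiv.Perm (Fin n) =>
        ∀ m : Fin r, sumPermN n d σ (i m) (j m) = k m) ≤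
      ((d : ℝ) ^ K / ∏ m : Fin r, (Nat.factorial (k m) : ℝ)) *
        (Nat.factorial (n - K) : ℝ) / (Nat.factorial n : ℝ) := by
  have hij : Function.Injective fun m => (i m, j m) := fun a b h =>
    by_contra fun hne => hdist a b hne h
  have hcount := card_forall_card_eq_mul_descFactorial_le (ι := Fin d) i j hij k
  simp only [Fintype.card_fin, hK] at hcount
  have hpr : pr (fun σ : Fin d → Perm (Fin n) => ∀ m, sumPermN n d σ (i m) (j m) = k m) ≤
      (∏ m, (d.choose (k m) : ℝ)) * (n - K)! / n ! := by
    simp only [sumPermN_apply]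
    rw [pr_eq_card_div, Fintype.card_fun, Fintype.card_perm, Fintype.card_fin, Fintype.card_fin,
      div_le_div_iff₀ (by positivity) (by positivity)]
    -- `n! = (n - K)! * n.descFactorial K` turns `hcount` into the cleared-denominator form
    exact_mod_cast calc
      _ = (n - K)! * (#{σ : Fin d → Perm (Fin n) | ∀ m, #{q | σ q (i m) = j m} = k m} *
            n.descFactorial K) := by rw [← Nat.factorial_mul_descFactorial hKn]; ring
      _ ≤ (n - K)! * ((∏ m, d.choose (k m)) * n ! ^ d) :=
        -- `convert` reconciles `Nat.decidableForallFin` here with `Fintype.decidableForallFintype`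
        Nat.mul_le_mul_left _ (by convert hcount)
      _ = (∏ m, d.choose (k m)) * (n - K)! * n ! ^ d := by ring
  refine ⟨hpr, hpr.trans ?_⟩
  gcongr
  rw [← hK]
  exact prod_choose_le_pow_sum_div d k

/-- For the sum `A` of `d ≥ 1` independent uniform `n×n` permutation matrices, pairwise
distinct pairs `(i_m, j_m)` and values `k_m ∈ {1,…,d}` with `k = Σ k_m ≤ n`:
`P(A_{i₁,j₁} = k₁, …, A_{i_r,j_r} = k_r) ≤ (∏_m C(d, k_m))·(n−k)!/n!`, and in particular
this probability is at most `(d^k/(k₁!⋯k_r!))·(n−k)!/n!`. -/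
theorem entries_prob_upper_bound (n d r : ℕ) (hd : 1 ≤ d) (hr : 1 ≤ r)
    (i j : Fin r → Fin n)
    (hdist : ∀ a b : Fin r, a ≠ b → (i a, j a) ≠ (i b, j b))
    (k : Fin r → ℕ) (hk1 : ∀ m, 1 ≤ k m) (hkd : ∀ m, k m ≤ d)
    (K : ℕ) (hK : ∑ m, k m = K) (hKn : K ≤ n) :
    pr (fun σ : Fin d → Equiv.Perm (Fin n) =>
        ∀ m : Fin r, sumPermN n d σ (i m) (j m) = k m) ≤
      (∏ m : Fin r, (Nat.choose d (k m) : ℝ)) *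
        (Nat.factorial (n - K) : ℝ) / (Nat.factorial n : ℝ) ∧
    pr (fun σ : Fin d → Equiv.Perm (Fin n) =>
        ∀ m : Fin r, sumPermN n d σ (i m) (j m) = k m) ≤
      ((d : ℝ) ^ K / ∏ m : Fin r, (Nat.factorial (k m) : ℝ)) *
        (Nat.factorial (n - K) : ℝ) / (Nat.factorial n : ℝ) :=
  entries_prob_upper_bound_general n d r i j hdist k K hK hKn
end
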